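/- arXiv:1609.05756 — 4 statements merged into one kernel-verified Lean document; each statement's English description precedes it below -/
import Mathlib

section
/- Suppose u: [0, δ) → ℝ is C² with u(0) = 0 and u(z) > 0 for z > 0, and u satisfies u·(u'' - (2/(1-z))·u') - (3/2)·(u'² - 1) = F·u² on [0, δ) for some continuous function F. Then u'(0) = 1. -/
open Set Filter Topology

/-! At `z = 0` the factor `u` vanishes, so the equation collapses to `u'(0)² = 1`; the sign is
fixed because `u` attains its minimum on `[0, δ)` at `0`. -/

theorem IsLocalMinOn.hasDerivWithinAt_nonneg {f : ℝ → ℝ} {f' a : ℝ} {s : Set ℝ}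
    (hmin : IsLocalMinOn f s a) (hf : HasDerivWithinAt f f' s a)
    (hs : ∃ᶠ x in 𝓝[>] a, x ∈ s) : 0 ≤ f' := by
  simpa using hmin.hasFDerivWithinAt_nonneg hf.hasFDerivWithinAt
    (one_mem_posTangentConeAt_iff_frequently.2 hs)

theorem hasDerivWithinAt_Ico_left_nonneg_of_le {f : ℝ → ℝ} {f' a b : ℝ} (hab : a < b)
    (hf : HasDerivWithinAt f f' (Ico a b) a) (hle : ∀ x ∈ Ioo a b, f a ≤ f x) : 0 ≤ f' := by
  have hmin : IsMinOn f (Ico a b) a := fun x hx =>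
    hx.1.eq_or_lt.elim (fun h => le_of_eq (congrArg f h)) fun h => hle x ⟨h, hx.2⟩
  exact hmin.localize.hasDerivWithinAt_nonneg hf
    (eventually_of_mem (Ioo_mem_nhdsGT hab) fun _ hx => Ioo_subset_Ico_self hx).frequently

theorem hamiltonian_regularity_first_derivative_general
    (δ : ℝ) (hδ0 : 0 < δ)
    (u u' u'' F : ℝ → ℝ)
    (hder : ∀ z ∈ Ico (0 : ℝ) δ, HasDerivWithinAt u (u' z) (Ico 0 δ) z)
    (hu0 : u 0 = 0)
    (hupos : ∀ z ∈ Ioo (0 : ℝ) δ, 0 < u z)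
    (hODE : ∀ z ∈ Ico (0 : ℝ) δ,
      u z * (u'' z - (2 / (1 - z)) * u' z) - (3 / 2) * ((u' z) ^ 2 - 1)
        = F z * (u z) ^ 2) :
    u' 0 = 1 := by
  have h0 : (0 : ℝ) ∈ Ico 0 δ := left_mem_Ico.2 hδ0
  have hsq : u' 0 ^ 2 = 1 := by
    have h := hODE 0 h0
    rw [hu0] at h
    linarith
  have hnonneg : 0 ≤ u' 0 :=
    hasDerivWithinAt_Ico_left_nonneg_of_le hδ0 (hder 0 h0) fun z hz => by
      rw [hu0]; exact (hupos z hz).le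
  exact (pow_eq_one_iff_of_nonneg hnonneg two_ne_zero).1 hsq

/-- Regularity condition at null infinity from the rescaled Hamiltonian constraint:
if `u` is `C²` on `[0, δ)` with `u(0) = 0`, `u > 0` on `(0, δ)`, and
`u·(u'' - (2/(1-z))·u') - (3/2)·(u'² - 1) = F·u²` with `F` continuous, then `u'(0) = 1`. -/
theorem hamiltonian_regularity_first_derivative
    (δ : ℝ) (hδ0 : 0 < δ) (hδ1 : δ < 1)
    (u u' u'' F : ℝ → ℝ)
    (hder : ∀ z ∈ Ico (0 : ℝ) δ, HasDerivWithinAt u (u' z) (Ico 0 δ) z)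
    (hder' : ∀ z ∈ Ico (0 : ℝ) δ, HasDerivWithinAt u' (u'' z) (Ico 0 δ) z)
    (hcont : ContinuousOn u'' (Ico 0 δ))
    (hF : ContinuousOn F (Ico 0 δ))
    (hu0 : u 0 = 0)
    (hupos : ∀ z ∈ Ioo (0 : ℝ) δ, 0 < u z)
    (hODE : ∀ z ∈ Ico (0 : ℝ) δ,
      u z * (u'' z - (2 / (1 - z)) * u' z) - (3 / 2) * ((u' z) ^ 2 - 1)
        = F z * (u z) ^ 2) :
    u' 0 = 1 :=
  hamiltonian_regularity_first_derivative_general δ hδ0 u u' u'' F hder hu0 hupos hODE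
end

section
/- Suppose u: [0, δ) → ℝ is C³ with u(0) = 0, u'(0) = 1, satisfying u·(u'' - (2/(1-z))·u') - (3/2)·(u'² - 1) = F·u² on [0, δ) with F continuously differentiable. Then u''(0) = -1. -/
open Set

/-!
Differentiate the constraint at `z = 0`. Since `u 0 = 0` and `u' 0 = 1`, the right-hand side
`F u²` has derivative `0` there, while on the left only `u' (u'' - 2u'/(1 - z)) - 3 u' u''`
survives, so `u'' 0 - 2 - 3 u'' 0 = 0`.
-/

theorem hasDerivWithinAt_const_div_one_sub (c : ℝ) {s : Set ℝ} {x : ℝ} (hx : x ≠ 1) :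
    HasDerivWithinAt (fun z => c / (1 - z)) (c / (1 - x) ^ 2) s x := by
  have hne : 1 - x ≠ 0 := sub_ne_zero.mpr hx.symm
  have hsub : HasDerivWithinAt (fun z => 1 - z) (-1) s x := (hasDerivWithinAt_id x s).const_sub 1
  refine ((hasDerivWithinAt_const x s c).div hsub hne).congr_deriv ?_
  ring

theorem hasDerivWithinAt_hamiltonian_lhs {u u' u'' : ℝ → ℝ} {c : ℝ} {s : Set ℝ} {x : ℝ}
    (hx : x ≠ 1) (hu : HasDerivWithinAt u (u' x) s x) (hu' : HasDerivWithinAt u' (u'' x) s x)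
    (hu'' : HasDerivWithinAt u'' c s x) :
    HasDerivWithinAt (fun z => u z * (u'' z - 2 / (1 - z) * u' z) - 3 / 2 * (u' z ^ 2 - 1))
      (u' x * (u'' x - 2 / (1 - x) * u' x)
        + u x * (c - (2 / (1 - x) ^ 2 * u' x + 2 / (1 - x) * u'' x))
        - 3 * u' x * u'' x) s x := by
  refine ((hu.mul (hu''.sub ((hasDerivWithinAt_const_div_one_sub 2 hx).mul hu'))).sub
    (((hu'.pow 2).sub_const 1).const_mul (3 / 2))).congr_deriv ?_
  simp only [Pi.sub_apply, Pi.mul_apply]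
  ring

theorem hamiltonian_regularity_second_derivative_general
    (δ : ℝ) (hδ0 : 0 < δ)
    (u u' u'' u''' F F' : ℝ → ℝ)
    (hder : ∀ z ∈ Ico (0 : ℝ) δ, HasDerivWithinAt u (u' z) (Ico 0 δ) z)
    (hder' : ∀ z ∈ Ico (0 : ℝ) δ, HasDerivWithinAt u' (u'' z) (Ico 0 δ) z)
    (hder'' : ∀ z ∈ Ico (0 : ℝ) δ, HasDerivWithinAt u'' (u''' z) (Ico 0 δ) z)
    (hFder : ∀ z ∈ Ico (0 : ℝ) δ, HasDerivWithinAt F (F' z) (Ico 0 δ) z)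
    (hu0 : u 0 = 0) (hu'0 : u' 0 = 1)
    (hODE : ∀ z ∈ Ico (0 : ℝ) δ,
      u z * (u'' z - (2 / (1 - z)) * u' z) - (3 / 2) * ((u' z) ^ 2 - 1)
        = F z * (u z) ^ 2) :
    u'' 0 = -1 := by
  have h0 : (0 : ℝ) ∈ Ico 0 δ := ⟨le_rfl, hδ0⟩
  have hlhs := hasDerivWithinAt_hamiltonian_lhs zero_ne_one (hder 0 h0) (hder' 0 h0) (hder'' 0 h0)
  have hrhs := ((hFder 0 h0).mul ((hder 0 h0).pow 2)).congr_of_mem hODE h0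
  have hderiv_eq := (uniqueDiffOn_Ico 0 δ 0 h0).eq_deriv _ hlhs hrhs
  simp only [Pi.pow_apply, hu0, hu'0] at hderiv_eq
  norm_num at hderiv_eq
  linarith

/-- Second-order regularity condition at null infinity: if `u` is `C³` on `[0, δ)` with
`u(0) = 0`, `u'(0) = 1`, satisfying `u·(u'' - (2/(1-z))·u') - (3/2)·(u'² - 1) = F·u²`
with `F` continuously differentiable, then `u''(0) = -1`. -/
theorem hamiltonian_regularity_second_derivative
    (δ : ℝ) (hδ0 : 0 < δ) (hδ1 : δ < 1)
    (u u' u'' u''' F F' : ℝ → ℝ)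
    (hder : ∀ z ∈ Ico (0 : ℝ) δ, HasDerivWithinAt u (u' z) (Ico 0 δ) z)
    (hder' : ∀ z ∈ Ico (0 : ℝ) δ, HasDerivWithinAt u' (u'' z) (Ico 0 δ) z)
    (hder'' : ∀ z ∈ Ico (0 : ℝ) δ, HasDerivWithinAt u'' (u''' z) (Ico 0 δ) z)
    (hcontu''' : ContinuousOn u''' (Ico 0 δ))
    (hFder : ∀ z ∈ Ico (0 : ℝ) δ, HasDerivWithinAt F (F' z) (Ico 0 δ) z)
    (hcontF' : ContinuousOn F' (Ico 0 δ))
    (hu0 : u 0 = 0) (hu'0 : u' 0 = 1)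
    (hODE : ∀ z ∈ Ico (0 : ℝ) δ,
      u z * (u'' z - (2 / (1 - z)) * u' z) - (3 / 2) * ((u' z) ^ 2 - 1)
        = F z * (u z) ^ 2) :
    u'' 0 = -1 :=
  hamiltonian_regularity_second_derivative_general δ hδ0 u u' u'' u''' F F' hder hder' hder'' hFder
    hu0 hu'0 hODE
end

section
/- Let N(r) = 1 - 2M/r, let C > 0, D, M be real constants, and let α₀(r) = sqrt(N(r) + (C·r - D/r²)²) be positive on (r₁, ∞). Then α₀ solves the ODE α₀·(α₀·α')' + (2/r)·α₀²·α' - 3·(C² + 2D²/r⁶)·α = 0 on (r₁, ∞) when α = α₀ (i.e., α₀ is a particular solution of this linear second-order ODE). -/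
open Set Filter Topology

/-!
For `α = √f` one has `α α' = f'/2`, so the lapse operator applied to `α` collapses to
`α (f''/2 + f'/r) = α (r² f')' / (2r²)`. For `f = N + (Cr - D/r²)²`,
`r² f' = 2(M + CD) + 2C²r³ - 4D²/r³`, whose derivative is `6r² (C² + 2D²/r⁶)`.
-/

theorem hasDerivAt_const_div_pow (a : ℝ) (n : ℕ) {x : ℝ} (hx : x ≠ 0) :
    HasDerivAt (fun y => a / y ^ n) (-(n * a) / x ^ (n + 1)) x := by
  have h : HasDerivAt (fun y => a * (y ^ n)⁻¹) _ x :=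
    ((hasDerivAt_pow n x).inv (pow_ne_zero n hx)).const_mul a
  simp only [← div_eq_mul_inv] at h
  refine h.congr_deriv ?_
  rcases n with _ | n
  · simp
  · rw [Nat.add_sub_cancel]
    field_simp
    ring

theorem sqrt_mul_deriv_sqrt {f : ℝ → ℝ} {f' x : ℝ} (hf : HasDerivAt f f' x) (hx : 0 < f x) :
    √(f x) * deriv (fun y => √(f y)) x = f' / 2 := by
  have : √(f x) ≠ 0 := (Real.sqrt_pos.mpr hx).ne'
  rw [(hf.sqrt hx.ne').deriv]
  field_simp

theorem deriv_sqrt_mul_deriv_sqrt {f f' : ℝ → ℝ} {f'' x : ℝ}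
    (hf : ∀ᶠ y in 𝓝 x, HasDerivAt f (f' y) y) (hf' : HasDerivAt f' f'' x) (hx : 0 < f x) :
    deriv (fun y => √(f y) * deriv (fun z => √(f z)) y) x = f'' / 2 := by
  have hpos : ∀ᶠ y in 𝓝 x, 0 < f y :=
    hf.self_of_nhds.continuousAt.eventually (lt_mem_nhds hx)
  have heq : (fun y => √(f y) * deriv (fun z => √(f z)) y) =ᶠ[𝓝 x] fun y => f' y / 2 := by
    filter_upwards [hf, hpos] with y hy hy' using sqrt_mul_deriv_sqrt hy hy'
  rw [heq.deriv_eq]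
  exact (hf'.div_const 2).deriv

theorem sqrt_lapse_operator {f f' : ℝ → ℝ} {f'' r : ℝ}
    (hf : ∀ᶠ y in 𝓝 r, HasDerivAt f (f' y) y) (hf' : HasDerivAt f' f'' r) (hr : 0 < f r) :
    √(f r) * deriv (fun y => √(f y) * deriv (fun z => √(f z)) y) r
      + (2 / r) * √(f r) ^ 2 * deriv (fun y => √(f y)) r
      = √(f r) * (f'' / 2 + f' r / r) := by
  have h := sqrt_mul_deriv_sqrt hf.self_of_nhds hr
  rw [deriv_sqrt_mul_deriv_sqrt hf hf' hr]
  linear_combination (2 / r * √(f r)) * h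

noncomputable def cmcLapseSq (M C D r : ℝ) : ℝ := 1 - 2 * M / r + (C * r - D / r ^ 2) ^ 2

noncomputable def cmcLapseSqDeriv (M C D r : ℝ) : ℝ :=
  2 * C ^ 2 * r + 2 * (M + C * D) / r ^ 2 - 4 * D ^ 2 / r ^ 5

theorem hasDerivAt_cmcLapseSq (M C D : ℝ) {r : ℝ} (hr : r ≠ 0) :
    HasDerivAt (cmcLapseSq M C D) (cmcLapseSqDeriv M C D r) r := by
  have h := (((hasDerivAt_const r 1).sub (hasDerivAt_const_div_pow (2 * M) 1 hr)).add
    ((((hasDerivAt_id r).const_mul C).sub (hasDerivAt_const_div_pow D 2 hr)).pow 2))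
  simp only [pow_one] at h
  refine h.congr_deriv ?_
  norm_num [cmcLapseSqDeriv]
  field_simp
  ring

theorem hasDerivAt_cmcLapseSqDeriv (M C D : ℝ) {r : ℝ} (hr : r ≠ 0) :
    HasDerivAt (cmcLapseSqDeriv M C D)
      (2 * C ^ 2 - 4 * (M + C * D) / r ^ 3 + 20 * D ^ 2 / r ^ 6) r := by
  have h := (((hasDerivAt_id r).const_mul (2 * C ^ 2)).add
    (hasDerivAt_const_div_pow (2 * (M + C * D)) 2 hr)).sub
    (hasDerivAt_const_div_pow (4 * D ^ 2) 5 hr)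
  refine h.congr_deriv ?_
  field_simp
  ring

theorem cmcLapseSq_lapse_identity (M C D : ℝ) {r : ℝ} (hr : r ≠ 0) :
    (2 * C ^ 2 - 4 * (M + C * D) / r ^ 3 + 20 * D ^ 2 / r ^ 6) / 2 + cmcLapseSqDeriv M C D r / r
      = 3 * (C ^ 2 + 2 * D ^ 2 / r ^ 6) := by
  unfold cmcLapseSqDeriv
  field_simp
  ring

theorem cmc_lapse_particular_solution_general
    (M C D r₁ : ℝ) (hr₁ : 0 < r₁)
    (N α₀ : ℝ → ℝ)
    (hN : ∀ r, N r = 1 - 2 * M / r)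
    (hα₀ : ∀ r, α₀ r = Real.sqrt (N r + (C * r - D / r ^ 2) ^ 2))
    (hpos : ∀ r ∈ Ioi r₁, 0 < N r + (C * r - D / r ^ 2) ^ 2) :
    ∀ r ∈ Ioi r₁,
      α₀ r * deriv (fun s => α₀ s * deriv α₀ s) r
        + (2 / r) * (α₀ r) ^ 2 * deriv α₀ r
        - 3 * (C ^ 2 + 2 * D ^ 2 / r ^ 6) * α₀ r = 0 := by
  intro r hr
  have hr0 : r ≠ 0 := (hr₁.trans hr).ne'
  have hα : α₀ = fun s => √(cmcLapseSq M C D s) := funext fun s => by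
    rw [hα₀, hN, cmcLapseSq]
  have hderiv : ∀ᶠ s in 𝓝 r, HasDerivAt (cmcLapseSq M C D) (cmcLapseSqDeriv M C D s) s :=
    (eventually_ne_nhds hr0).mono fun s hs => hasDerivAt_cmcLapseSq M C D hs
  have hf : 0 < cmcLapseSq M C D r := by simpa only [cmcLapseSq, hN] using hpos r hr
  subst hα
  rw [sqrt_lapse_operator hderiv (hasDerivAt_cmcLapseSqDeriv M C D hr0) hf,
    cmcLapseSq_lapse_identity M C D hr0]
  ring

/-- `α₀(r) = sqrt(N(r) + (C·r - D/r²)²)` with `N(r) = 1 - 2M/r` is a particular solution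
of the CMC lapse equation `α₀·(α₀·α')' + (2/r)·α₀²·α' - 3·(C² + 2D²/r⁶)·α = 0`
on `(r₁, ∞)`. -/
theorem cmc_lapse_particular_solution
    (M C D r₁ : ℝ) (hC : 0 < C) (hr₁ : 0 < r₁)
    (N α₀ : ℝ → ℝ)
    (hN : ∀ r, N r = 1 - 2 * M / r)
    (hα₀ : ∀ r, α₀ r = Real.sqrt (N r + (C * r - D / r ^ 2) ^ 2))
    (hpos : ∀ r ∈ Ioi r₁, 0 < N r + (C * r - D / r ^ 2) ^ 2) :
    ∀ r ∈ Ioi r₁,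
      α₀ r * deriv (fun s => α₀ s * deriv α₀ s) r
        + (2 / r) * (α₀ r) ^ 2 * deriv α₀ r
        - 3 * (C ^ 2 + 2 * D ^ 2 / r ^ 6) * α₀ r = 0 :=
  cmc_lapse_particular_solution_general M C D r₁ hr₁ N α₀ hN hα₀ hpos
end

section
/- Let u(z) = z - z²/2 - (f₀/6)z³ - ((3f₀+f₁)/8)z⁴·log z + u₄z⁴ + O(z⁵ log z) and v(z) = f₀z + (3f₀+f₁)z²log z + v₂z² + O(z³ log z) be formal polyhomogeneous series. Then S(z) := (1/u)·(u_zz + u_z/(1-z) + (3/2)v) extends continuously to z = 0, with S(0) = f₀/2; in particular, the log z terms cancel in u·S to the orders shown. -/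
open Set Filter Asymptotics Topology Real

/-!
Truncate each expansion at order `z²`. The only terms of order `≤ 2` that are not `O(z²)` are
`u_zz = -1 - f₀ z - (3/2)(3f₀+f₁) z² log z + O(z²)`, `u_z/(1-z) = 1 + O(z²)` and
`v = f₀ z + (3f₀+f₁) z² log z + O(z²)`, so in `u_zz + u_z/(1-z) + (3/2) v` the constants and the
`z² log z` terms cancel, leaving `(f₀/2) z + O(z²)`. Since also `u = z + O(z²)`, dividing
numerator and denominator by `z` gives the limit `f₀/2`.
-/

theorem isBigO_pow_mul_of_continuousAt {r : ℝ → ℝ} (hr : ContinuousAt r 0) (n : ℕ) :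
    (fun z => z ^ n * r z) =O[𝓝 0] fun z => z ^ n :=
  ((isBigO_refl _ _).mul (hr.tendsto.isBigO_one ℝ)).congr_right fun _ => mul_one _

theorem isBigO_pow_mul_log {m n : ℕ} (hmn : m < n) :
    (fun z => z ^ n * log z) =O[𝓝 0] fun z => z ^ m := by
  obtain ⟨k, rfl⟩ := Nat.exists_eq_add_of_lt hmn
  have hr : ContinuousAt (fun z => z ^ k * (z * log z)) 0 := by
    have := continuous_mul_log
    fun_prop
  exact (isBigO_pow_mul_of_continuousAt hr m).congr_left fun z => by ring

theorem isBigO_pow_of_expansion {f g p r : ℝ → ℝ} {m n : ℕ} (hmn : m < n)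
    (hf : (fun z => f z - g z) =O[𝓝[>] 0] fun z => z ^ n * log z)
    (hr : ContinuousAt r 0) (hgp : ∀ z, g z - p z = z ^ m * r z) :
    (fun z => f z - p z) =O[𝓝[>] 0] fun z => z ^ m :=
  (hf.trans ((isBigO_pow_mul_log hmn).mono nhdsWithin_le_nhds)).triangle
    (((isBigO_pow_mul_of_continuousAt hr m).mono nhdsWithin_le_nhds).congr_left fun z =>
      (hgp z).symm)

theorem tendsto_div_self_of_isBigO_sq {l : Filter ℝ} (hl : l ≤ 𝓝[≠] 0) {f : ℝ → ℝ} {c : ℝ}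
    (hf : (fun z => f z - c * z) =O[l] fun z => z ^ 2) :
    Tendsto (fun z => f z / z) l (𝓝 c) := by
  have hne : ∀ᶠ z in l, z ≠ 0 := hl self_mem_nhdsWithin
  have hid : Tendsto (fun z : ℝ => z) l (𝓝 0) := tendsto_id.mono_left (hl.trans nhdsWithin_le_nhds)
  have hO : (fun z => f z / z - c) =O[l] fun z => z :=
    (hf.mul (isBigO_refl (fun z : ℝ => z⁻¹) l)).congr' (hne.mono fun z hz => by field_simp)
      (hne.mono fun z hz => by field_simp)
  exact tendsto_sub_nhds_zero_iff.mp (hO.trans_tendsto hid)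

theorem isBigO_div_one_sub_sub_one {l : Filter ℝ} (hl : l ≤ 𝓝 0) {f g : ℝ → ℝ}
    (hf : (fun z => f z - (1 - z)) =O[l] g) : (fun z => f z / (1 - z) - 1) =O[l] g := by
  have hinv : ContinuousAt (fun z : ℝ => (1 - z)⁻¹) 0 := by fun_prop (disch := norm_num)
  have hne : ∀ᶠ z in l, 1 - z ≠ 0 :=
    ((eventually_ne_nhds (zero_ne_one' ℝ)).filter_mono hl).mono fun z hz => sub_ne_zero.mpr hz.symm
  refine (hf.mul ((hinv.tendsto.isBigO_one ℝ).mono hl)).congr' (hne.mono fun z hz => ?_)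
    (Eventually.of_forall fun _ => mul_one _)
  field_simp

/-- Given the polyhomogeneous expansions of `u` (and its formal derivatives `u_z`, `u_zz`)
and of `v` at null infinity, the apparently singular quantity
`S = (1/u)·(u_zz + u_z/(1-z) + (3/2)·v)` is regular: the `log z` terms cancel in `u·S`
(so that `u·S = (f₀/2)·z + O(z²)`), and `S` extends continuously to `z = 0` with
`S(0) = f₀/2`. -/
theorem singular_term_regular_at_scri
    (f₀ f₁ u₄ v₂ : ℝ) (u uz uzz v : ℝ → ℝ)
    (hu : (fun z => u z - (z - z ^ 2 / 2 - (f₀ / 6) * z ^ 3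
        - ((3 * f₀ + f₁) / 8) * z ^ 4 * Real.log z + u₄ * z ^ 4))
      =O[nhdsWithin 0 (Ioi 0)] (fun z => z ^ 5 * Real.log z))
    (huz : (fun z => uz z - (1 - z - (f₀ / 2) * z ^ 2
        - ((3 * f₀ + f₁) / 8) * (4 * z ^ 3 * Real.log z + z ^ 3) + 4 * u₄ * z ^ 3))
      =O[nhdsWithin 0 (Ioi 0)] (fun z => z ^ 4 * Real.log z))
    (huzz : (fun z => uzz z - (-1 - f₀ * z
        - ((3 * f₀ + f₁) / 8) * (12 * z ^ 2 * Real.log z + 7 * z ^ 2) + 12 * u₄ * z ^ 2))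
      =O[nhdsWithin 0 (Ioi 0)] (fun z => z ^ 3 * Real.log z))
    (hv : (fun z => v z - (f₀ * z + (3 * f₀ + f₁) * z ^ 2 * Real.log z + v₂ * z ^ 2))
      =O[nhdsWithin 0 (Ioi 0)] (fun z => z ^ 3 * Real.log z)) :
    ((fun z => (uzz z + uz z / (1 - z) + (3 / 2) * v z) - (f₀ / 2) * z)
      =O[nhdsWithin 0 (Ioi 0)] (fun z => z ^ 2)) ∧
    Tendsto (fun z => (uzz z + uz z / (1 - z) + (3 / 2) * v z) / u z)
      (nhdsWithin 0 (Ioi 0)) (nhds (f₀ / 2)) := by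
  -- lets `fun_prop` prove continuity of the remainders below, which involve `z * log z`
  have hml := continuous_mul_log
  have hUzz : (fun z => uzz z - (-1 - f₀ * z - 3 / 2 * (3 * f₀ + f₁) * z ^ 2 * log z))
      =O[𝓝[>] 0] fun z => z ^ 2 :=
    isBigO_pow_of_expansion (r := fun _ => 12 * u₄ - 7 * ((3 * f₀ + f₁) / 8)) (by norm_num) huzz
      continuousAt_const fun z => by ring
  have hV : (fun z => v z - (f₀ * z + (3 * f₀ + f₁) * z ^ 2 * log z)) =O[𝓝[>] 0] fun z => z ^ 2 :=
    isBigO_pow_of_expansion (r := fun _ => v₂) (by norm_num) hv continuousAt_const fun z => by ring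
  have hUz : (fun z => uz z - (1 - z)) =O[𝓝[>] 0] fun z => z ^ 2 :=
    isBigO_pow_of_expansion
      (r := fun z => -(f₀ / 2) - (3 * f₀ + f₁) / 2 * (z * log z) + (4 * u₄ - (3 * f₀ + f₁) / 8) * z)
      (by norm_num) huz (by fun_prop) fun z => by ring
  have hU : (fun z => u z - 1 * z) =O[𝓝[>] 0] fun z => z ^ 2 :=
    isBigO_pow_of_expansion
      (r := fun z => -1 / 2 - f₀ / 6 * z - (3 * f₀ + f₁) / 8 * z * (z * log z) + u₄ * z ^ 2)
      (by norm_num) hu (by fun_prop) fun z => by ring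
  have hQuot := isBigO_div_one_sub_sub_one nhdsWithin_le_nhds hUz
  have hNum : (fun z => uzz z + uz z / (1 - z) + 3 / 2 * v z - f₀ / 2 * z)
      =O[𝓝[>] 0] fun z => z ^ 2 :=
    ((hUzz.add hQuot).add (hV.const_mul_left (3 / 2))).congr_left fun z => by ring
  refine ⟨hNum, ?_⟩
  have hl : 𝓝[>] (0 : ℝ) ≤ 𝓝[≠] 0 := nhdsWithin_mono _ fun z hz => ne_of_gt hz
  have hlim := (tendsto_div_self_of_isBigO_sq hl hNum).div (tendsto_div_self_of_isBigO_sq hl hU)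
    one_ne_zero
  rw [div_one] at hlim
  exact hlim.congr' (eventually_mem_nhdsWithin.mono fun z hz =>
    div_div_div_cancel_right₀ (ne_of_gt hz) _ _)
end
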